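/- Let k_1, ..., k_n > 0, a_i, b_i ∈ ℕ with a_i ≤ b_i for all i, a_+ := Σ a_i ≥ 2, and let c, c', α > 0. Then the function g̃(y) = c·∏_{i=1}^n (y + k_i)^{a_i} − α·c'·∏_{i=1}^n (y + k_i)^{b_i} − y has at most three roots in (0, ∞), counted with multiplicity. -/

import Mathlib

/-!
Write `γ = ∏ (X + kᵢ)^aᵢ` and `∏ (X + kᵢ)^bᵢ = δ γ`, so `g'' = c γ'' - α c' (δ γ)''`. Rolle's
theorem, applied to `g`, to `g'` and to `g'' / γ''`, loses at most one positive root (counted with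
multiplicity) at each step and ends at the Wronskian `W(γ'', g'') = -α c' W(γ'', (δ γ)'')`. In
terms of the Taylor coefficients `cⱼ` at `y > 0`, the sign of `W(γ'', (δ γ)'')` is that of the
increase of `c₃ / c₂` from `γ` to `δ γ`, and each linear factor `X + s` raises this ratio because
of Newton's inequality `2 c₂² ≥ 3 c₁ c₃`, which gives `c₁ c₃ < c₂²` as soon as `c₂ > 0`, that is,
as soon as the degree is at least 2 (here `deg γ = a₊`).
If `δ = 1`, then `g'' = (c - α c') γ''` has no positive roots at all.
-/

open Polynomial

theorem Multiset.card_le_card_add_one_of_interleaved {α : Type*} [LinearOrder α]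
    {P Q : Multiset α} (hcount : ∀ x ∈ P, P.count x ≤ Q.count x + 1)
    (hbetween : ∀ x ∈ P, ∀ y ∈ P, x < y → (∀ z ∈ P, z ∉ Set.Ioo x y) →
      ∃ z ∈ Q, x < z ∧ z < y) :
    card P ≤ card Q + 1 := by
  classical
  have hgaps : P.toFinset.card ≤ (Q.toFinset \ P.toFinset).card + 1 :=
    Finset.card_le_sdiff_of_interleaved <| by simpa only [Multiset.mem_toFinset] using hbetween
  calc card P = ∑ x ∈ P.toFinset, P.count x := (Multiset.toFinset_sum_count_eq P).symm
    _ ≤ ∑ x ∈ P.toFinset, (Q.count x + 1) :=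
      Finset.sum_le_sum fun x hx => hcount x (Multiset.mem_toFinset.1 hx)
    _ = ∑ x ∈ P.toFinset, Q.count x + P.toFinset.card := by
      rw [Finset.sum_add_distrib, Finset.card_eq_sum_ones]
    _ ≤ ∑ x ∈ P.toFinset, Q.count x + (∑ x ∈ Q.toFinset \ P.toFinset, Q.count x + 1) := by
      grw [hgaps, Finset.card_eq_sum_ones]
      gcongr with x hx
      exact Multiset.one_le_count_iff_mem.2 (Multiset.mem_toFinset.1 (Finset.mem_sdiff.1 hx).1)
    _ = card Q + 1 := by
      rw [← add_assoc, ← Finset.sum_union Finset.disjoint_sdiff, Multiset.sum_count_eq_card]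
      intro x hx
      by_cases hxP : x ∈ P.toFinset
      · exact Finset.mem_union_left _ hxP
      · exact Finset.mem_union_right _ (Finset.mem_sdiff.2 ⟨Multiset.mem_toFinset.2 hx, hxP⟩)

namespace Polynomial

theorem wronskian_one_left {R : Type*} [CommRing R] (p : R[X]) : wronskian 1 p = derivative p := by
  simp [wronskian]

theorem rootMultiplicity_sub_one_le_rootMultiplicity_wronskian {R : Type*} [CommRing R]
    {u p : R[X]} (t : R) (hw : wronskian u p ≠ 0) :
    p.rootMultiplicity t - 1 ≤ (wronskian u p).rootMultiplicity t := by
  have hp := p.pow_rootMultiplicity_dvd t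
  have hp' := pow_sub_one_dvd_derivative_of_pow_dvd hp
  rw [le_rootMultiplicity_iff hw, wronskian]
  exact dvd_sub (hp'.mul_left u) (((pow_dvd_pow _ (Nat.sub_le _ 1)).trans hp).mul_left _)

theorem exists_isRoot_wronskian_of_isRoot {u p : ℝ[X]} {x y : ℝ} (hxy : x < y)
    (hu : ∀ z ∈ Set.Icc x y, u.eval z ≠ 0) (hx : p.IsRoot x) (hy : p.IsRoot y) :
    ∃ z ∈ Set.Ioo x y, (wronskian u p).IsRoot z := by
  obtain ⟨z, hz, hderiv⟩ := exists_deriv_eq_zero (f := (fun z => p.eval z) / fun z => u.eval z)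
    hxy (p.continuousOn.div u.continuousOn hu)
    (by simp only [Pi.div_apply, hx.eq_zero, hy.eq_zero, zero_div])
  have huz := hu z (Set.Ioo_subset_Icc_self hz)
  rw [((p.hasDerivAt z).div (u.hasDerivAt z) huz).deriv, div_eq_zero_iff,
    or_iff_left (pow_ne_zero 2 huz), sub_eq_zero] at hderiv
  refine ⟨z, hz, ?_⟩
  simp only [IsRoot, wronskian, eval_sub, eval_mul, sub_eq_zero]
  linarith

theorem card_roots_filter_le_wronskian {s : Set ℝ} [DecidablePred (· ∈ s)] (hs : s.OrdConnected)
    {u p : ℝ[X]} (hu : ∀ x ∈ s, u.eval x ≠ 0) (hw : wronskian u p ≠ 0) :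
    Multiset.card (p.roots.filter (· ∈ s)) ≤
      Multiset.card ((wronskian u p).roots.filter (· ∈ s)) + 1 := by
  have hp : p ≠ 0 := by rintro rfl; exact hw (wronskian_zero_right u)
  apply Multiset.card_le_card_add_one_of_interleaved
  · intro x hx
    have hxs := (Multiset.mem_filter.1 hx).2
    rw [Multiset.count_filter_of_pos hxs, Multiset.count_filter_of_pos hxs, count_roots,
      count_roots]
    have := rootMultiplicity_sub_one_le_rootMultiplicity_wronskian x hw
    omega
  · intro x hx y hy hxy _
    rw [Multiset.mem_filter, mem_roots hp] at hx hy
    have hIcc := hs.out hx.2 hy.2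
    obtain ⟨z, hz, hroot⟩ := exists_isRoot_wronskian_of_isRoot hxy
      (fun z hz => hu z (hIcc hz)) hx.1 hy.1
    exact ⟨z, Multiset.mem_filter.2 ⟨(mem_roots hw).2 hroot, hIcc (Set.Ioo_subset_Icc_self hz)⟩,
      hz⟩

theorem card_roots_filter_le_derivative_derivative {s : Set ℝ} [DecidablePred (· ∈ s)]
    (hs : s.OrdConnected) {p : ℝ[X]} (hp : derivative (derivative p) ≠ 0) :
    Multiset.card (p.roots.filter (· ∈ s)) ≤
      Multiset.card ((derivative (derivative p)).roots.filter (· ∈ s)) + 2 := by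
  have hp' : derivative p ≠ 0 := fun h => hp (by rw [h, derivative_zero])
  have h1 := card_roots_filter_le_wronskian hs (u := 1) (p := p) (by simp)
    (by rwa [wronskian_one_left])
  have h2 := card_roots_filter_le_wronskian hs (u := 1) (p := derivative p) (by simp)
    (by rwa [wronskian_one_left])
  rw [wronskian_one_left] at h1 h2
  omega

theorem eval_iterate_derivative_eq_factorial_mul_coeff_taylor {R : Type*} [CommSemiring R]
    (P : R[X]) (n : ℕ) (y : R) :
    (derivative^[n] P).eval y = n.factorial * (taylor y P).coeff n := by
  rw [taylor_coeff, ← factorial_smul_hasseDeriv, LinearMap.smul_apply, eval_smul, nsmul_eq_mul]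

theorem coeff_X_add_C_mul_zero {R : Type*} [Semiring R] (s : R) (P : R[X]) :
    ((X + C s) * P).coeff 0 = s * P.coeff 0 := by
  simp [add_mul]

theorem coeff_X_add_C_mul_succ {R : Type*} [Semiring R] (s : R) (P : R[X]) (n : ℕ) :
    ((X + C s) * P).coeff (n + 1) = P.coeff n + s * P.coeff (n + 1) := by
  simp [add_mul]

noncomputable def negRootedMonic : Submonoid ℝ[X] :=
  Submonoid.closure ((fun s => X + C s) '' Set.Ioi 0)

namespace negRootedMonic

variable {P Q : ℝ[X]}

theorem X_add_C_mem {s : ℝ} (hs : 0 < s) : X + C s ∈ negRootedMonic :=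
  Submonoid.subset_closure ⟨s, hs, rfl⟩

theorem coeff_pos (hQ : Q ∈ negRootedMonic) {n : ℕ} (hn : n ≤ Q.natDegree) : 0 < Q.coeff n := by
  induction hQ using Submonoid.closure_induction_left generalizing n with
  | one => simp_all
  | mul_left x hx P hP ih =>
    obtain ⟨s, hs, rfl⟩ := hx
    have hP0 : P ≠ 0 := fun h => (ih (Nat.zero_le _)).ne' (by simp [h])
    rw [natDegree_mul (X_add_C_ne_zero s) hP0, natDegree_X_add_C] at hn
    rcases n with _ | n
    · rw [coeff_X_add_C_mul_zero]
      exact mul_pos hs (ih (Nat.zero_le _))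
    · rw [coeff_X_add_C_mul_succ]
      have hnext : 0 ≤ P.coeff (n + 1) := by
        rcases le_or_gt (n + 1) P.natDegree with h | h
        · exact (ih h).le
        · rw [coeff_eq_zero_of_natDegree_lt h]
      exact add_pos_of_pos_of_nonneg (ih (by omega)) (mul_nonneg hs.le hnext)

theorem ne_zero (hQ : Q ∈ negRootedMonic) : Q ≠ 0 := fun h =>
  (coeff_pos hQ (Nat.zero_le _)).ne' (by simp [h])

theorem coeff_nonneg (hQ : Q ∈ negRootedMonic) (n : ℕ) : 0 ≤ Q.coeff n := by
  rcases le_or_gt n Q.natDegree with h | h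
  · exact (coeff_pos hQ h).le
  · rw [coeff_eq_zero_of_natDegree_lt h]

theorem taylor_mem (hQ : Q ∈ negRootedMonic) {y : ℝ} (hy : 0 ≤ y) :
    taylor y Q ∈ negRootedMonic := by
  have : negRootedMonic ≤ negRootedMonic.comap (taylorAlgHom y) := by
    refine Submonoid.closure_le.2 ?_
    rintro _ ⟨s, hs, rfl⟩
    change taylor y (X + C s) ∈ negRootedMonic
    rw [map_add, taylor_X, taylor_C, add_assoc, ← C_add]
    exact X_add_C_mem (add_pos_of_nonneg_of_pos hy hs)
  exact this hQ

/-- The middle inequality is only there to make the induction on linear factors go through. -/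
theorem newton_inequalities (hQ : Q ∈ negRootedMonic) :
    2 * Q.coeff 0 * Q.coeff 2 ≤ Q.coeff 1 ^ 2 ∧
    3 * Q.coeff 0 * Q.coeff 3 ≤ Q.coeff 1 * Q.coeff 2 ∧
    3 * Q.coeff 1 * Q.coeff 3 ≤ 2 * Q.coeff 2 ^ 2 := by
  induction hQ using Submonoid.closure_induction_left with
  | one => simp [coeff_one]
  | mul_left x hx P hP ih =>
    obtain ⟨s, hs, rfl⟩ := hx
    obtain ⟨h₁, h₂, h₃⟩ := ih
    simp only [coeff_X_add_C_mul_zero, coeff_X_add_C_mul_succ]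
    have hA := coeff_nonneg hP 0
    have hB := coeff_nonneg hP 1
    refine ⟨?_, ?_, ?_⟩
    · nlinarith [sq_nonneg (P.coeff 0), mul_le_mul_of_nonneg_left h₁ (sq_nonneg s)]
    · nlinarith [mul_nonneg hA hB, mul_le_mul_of_nonneg_left h₁ hs.le,
        mul_le_mul_of_nonneg_left h₂ (sq_nonneg s)]
    · nlinarith [sq_nonneg (P.coeff 1), mul_le_mul_of_nonneg_left h₂ hs.le,
        mul_le_mul_of_nonneg_left h₃ (sq_nonneg s)]

theorem coeff_three_div_coeff_two_lt_X_add_C_mul (hP : P ∈ negRootedMonic)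
    (hdeg : 2 ≤ P.natDegree) {s : ℝ} (hs : 0 < s) :
    P.coeff 3 / P.coeff 2 < ((X + C s) * P).coeff 3 / ((X + C s) * P).coeff 2 := by
  simp only [coeff_X_add_C_mul_succ]
  have hC := coeff_pos hP hdeg
  have hB := coeff_nonneg hP 1
  have hnewton := (newton_inequalities hP).2.2
  -- cross-multiplied, the claim is `c₁ c₃ < c₂²`
  rw [div_lt_div_iff₀ hC (by positivity)]
  nlinarith

theorem coeff_three_div_coeff_two_lt_mul {γ δ : ℝ[X]} (hγ : γ ∈ negRootedMonic)
    (hdeg : 2 ≤ γ.natDegree) (hδ : δ ∈ negRootedMonic) (hδ1 : δ ≠ 1) :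
    γ.coeff 3 / γ.coeff 2 < (δ * γ).coeff 3 / (δ * γ).coeff 2 := by
  induction hδ using Submonoid.closure_induction_left with
  | one => exact absurd rfl hδ1
  | mul_left x hx P hP ih =>
    obtain ⟨s, hs, rfl⟩ := hx
    have hPγ : 2 ≤ (P * γ).natDegree := by
      rw [natDegree_mul (ne_zero hP) (ne_zero hγ)]
      omega
    have hstep := coeff_three_div_coeff_two_lt_X_add_C_mul (mul_mem hP hγ) hPγ hs
    rw [mul_assoc]
    rcases eq_or_ne P 1 with rfl | hP1
    · simpa using hstep
    · exact (ih hP1).trans hstep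

theorem eval_derivative_derivative_pos {γ : ℝ[X]} (hγ : γ ∈ negRootedMonic)
    (hdeg : 2 ≤ γ.natDegree) {y : ℝ} (hy : 0 ≤ y) :
    0 < (derivative (derivative γ)).eval y := by
  have hcoeff := coeff_pos (taylor_mem hγ hy) (n := 2) (by rwa [natDegree_taylor])
  rw [show derivative (derivative γ) = derivative^[2] γ from rfl,
    eval_iterate_derivative_eq_factorial_mul_coeff_taylor]
  exact mul_pos (by norm_num [Nat.factorial]) hcoeff

theorem eval_wronskian_pos {γ δ : ℝ[X]} (hγ : γ ∈ negRootedMonic) (hdeg : 2 ≤ γ.natDegree)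
    (hδ : δ ∈ negRootedMonic) (hδ1 : δ ≠ 1) {y : ℝ} (hy : 0 ≤ y) :
    0 < (wronskian (derivative (derivative γ)) (derivative (derivative (δ * γ)))).eval y := by
  have hγy := taylor_mem hγ hy
  have hdegy : 2 ≤ (taylor y γ).natDegree := by rwa [natDegree_taylor]
  have hδy1 : taylor y δ ≠ 1 := fun h => hδ1 (taylor_injective y (by simp [h]))
  have hlt := coeff_three_div_coeff_two_lt_mul hγy hdegy (taylor_mem hδ hy) hδy1
  have hωy := mul_mem (taylor_mem hδ hy) hγy
  have hdegω : 2 ≤ (taylor y δ * taylor y γ).natDegree := by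
    rw [natDegree_mul (ne_zero (taylor_mem hδ hy)) (ne_zero hγy)]
    omega
  rw [div_lt_div_iff₀ (coeff_pos hγy hdegy) (coeff_pos hωy hdegω)] at hlt
  change 0 < (derivative^[2] γ * derivative^[3] (δ * γ)
    - derivative^[3] γ * derivative^[2] (δ * γ)).eval y
  simp only [eval_sub, eval_mul, eval_iterate_derivative_eq_factorial_mul_coeff_taylor, taylor_mul]
  norm_num [Nat.factorial]
  linarith

end negRootedMonic

open negRootedMonic

theorem card_roots_filter_eq_zero {s : Set ℝ} [DecidablePred (· ∈ s)] {p : ℝ[X]}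
    (hp : ∀ x ∈ s, p.eval x ≠ 0) : Multiset.card (p.roots.filter (· ∈ s)) = 0 := by
  rw [Multiset.card_eq_zero, Multiset.filter_eq_nil]
  exact fun x hx hxs => hp x hxs (isRoot_of_mem_roots hx)

theorem card_pos_roots_C_mul_sub_X_le_two {γ : ℝ[X]} (hγ : γ ∈ negRootedMonic)
    (hdeg : 2 ≤ γ.natDegree) (e : ℝ) :
    ((C e * γ - X).roots.filter (0 < ·)).card ≤ 2 := by
  rcases eq_or_ne e 0 with rfl | he
  · simp [roots_neg, Multiset.filter_singleton]
  have hg2 : derivative (derivative (C e * γ - X)) = C e * derivative (derivative γ) := by simp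
  have hne : ∀ y ∈ Set.Ioi (0 : ℝ), (C e * derivative (derivative γ)).eval y ≠ 0 :=
    fun y hy => by simpa [he] using (eval_derivative_derivative_pos hγ hdeg hy.le).ne'
  have h := card_roots_filter_le_derivative_derivative (Set.ordConnected_Ioi (a := (0 : ℝ)))
    (p := C e * γ - X) (by rw [hg2]; exact fun h => hne 1 (Set.mem_Ioi.2 one_pos) (by simp [h]))
  rw [hg2, card_roots_filter_eq_zero hne] at h
  exact h

theorem card_pos_roots_C_mul_sub_C_mul_mul_sub_X_le_three {γ δ : ℝ[X]} (hγ : γ ∈ negRootedMonic)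
    (hdeg : 2 ≤ γ.natDegree) (hδ : δ ∈ negRootedMonic) (hδ1 : δ ≠ 1) (c : ℝ) {d : ℝ}
    (hd : d ≠ 0) :
    ((C c * γ - C d * (δ * γ) - X).roots.filter (0 < ·)).card ≤ 3 := by
  set g := C c * γ - C d * (δ * γ) - X
  have hg2 : derivative (derivative g) =
      C c * derivative (derivative γ) - C d * derivative (derivative (δ * γ)) := by simp [g]
  have hW : wronskian (derivative (derivative γ)) (derivative (derivative g)) =
      -(C d * wronskian (derivative (derivative γ)) (derivative (derivative (δ * γ)))) := by
    rw [hg2]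
    simp only [wronskian, derivative_sub, derivative_C_mul]
    ring
  have hWne : ∀ y ∈ Set.Ioi (0 : ℝ),
      (wronskian (derivative (derivative γ)) (derivative (derivative g))).eval y ≠ 0 :=
    fun y hy => by simpa [hW, hd] using (eval_wronskian_pos hγ hdeg hδ hδ1 hy.le).ne'
  have hW0 : wronskian (derivative (derivative γ)) (derivative (derivative g)) ≠ 0 :=
    fun h => hWne 1 (Set.mem_Ioi.2 one_pos) (by simp [h])
  have hg20 : derivative (derivative g) ≠ 0 := fun h => hW0 (by rw [h, wronskian_zero_right])
  have h1 :=
    card_roots_filter_le_derivative_derivative (Set.ordConnected_Ioi (a := (0 : ℝ))) hg20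
  have h2 := card_roots_filter_le_wronskian (Set.ordConnected_Ioi (a := (0 : ℝ)))
    (fun y hy => (eval_derivative_derivative_pos hγ hdeg hy.le).ne') hW0
  rw [card_roots_filter_eq_zero hWne] at h2
  exact h1.trans (by omega)

end Polynomial

theorem stmt15_general (n : ℕ) (k : Fin n → ℝ) (hk : ∀ i, 0 < k i)
    (a b : Fin n → ℕ) (hab : ∀ i, a i ≤ b i) (ha : 2 ≤ ∑ i, a i)
    (c c' α : ℝ) (hc' : 0 < c') (hα : 0 < α)
    (g : ℝ[X])
    (hg : g = C c * ∏ i, (X + C (k i)) ^ a i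
        - C (α * c') * ∏ i, (X + C (k i)) ^ b i - X) :
    (g.roots.filter (fun y => 0 < y)).card ≤ 3 := by
  have hmem (e : Fin n → ℕ) : ∏ i, (X + C (k i)) ^ e i ∈ negRootedMonic :=
    prod_mem fun i _ => pow_mem (negRootedMonic.X_add_C_mem (hk i)) _
  have hdeg : 2 ≤ (∏ i, (X + C (k i)) ^ a i).natDegree := by
    rw [natDegree_prod_of_monic _ _ fun i _ => (monic_X_add_C _).pow _]
    simpa [natDegree_pow] using ha
  have hsplit : ∏ i, (X + C (k i)) ^ b i =
      (∏ i, (X + C (k i)) ^ (b i - a i)) * ∏ i, (X + C (k i)) ^ a i := by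
    rw [← Finset.prod_mul_distrib]
    exact Finset.prod_congr rfl fun i _ => by rw [← pow_add, Nat.sub_add_cancel (hab i)]
  rw [hg, hsplit]
  rcases eq_or_ne (∏ i, (X + C (k i)) ^ (b i - a i)) 1 with h1 | h1
  · rw [h1, one_mul, ← sub_mul, ← C_sub]
    exact (card_pos_roots_C_mul_sub_X_le_two (hmem a) hdeg _).trans (by norm_num)
  · exact card_pos_roots_C_mul_sub_C_mul_mul_sub_X_le_three (hmem a) hdeg (hmem _) h1 c
      (mul_pos hα hc').ne'

theorem stmt15 (n : ℕ) (k : Fin n → ℝ) (hk : ∀ i, 0 < k i)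
    (a b : Fin n → ℕ) (hab : ∀ i, a i ≤ b i) (ha : 2 ≤ ∑ i, a i)
    (c c' α : ℝ) (hc : 0 < c) (hc' : 0 < c') (hα : 0 < α)
    (g : ℝ[X])
    (hg : g = C c * ∏ i, (X + C (k i)) ^ a i
        - C (α * c') * ∏ i, (X + C (k i)) ^ b i - X) :
    (g.roots.filter (fun y => 0 < y)).card ≤ 3 :=
  stmt15_general n k hk a b hab ha c c' α hc' hα g hg
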